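/- For every integer n ≥ 1, the function g(z) = A_{0,2n}(z) − B_{0,2n}(z) cos z − C_{0,2n}(z) sin z has vanishing j-th derivative at z = 0 for every j ≤ 2n+1. -/

import Mathlib

open Real

/-- The polynomial `A_{0,2n}` (as a function of `z`). -/
noncomputable def A0 (n : ℕ) (z : ℝ) : ℝ :=
  ((Nat.factorial n : ℝ) ^ 2 / (Nat.factorial (2 * n) : ℝ)) *
    ∑ k ∈ Finset.range (n + 1),
      (Nat.factorial (2 * n + 2 * k) : ℝ) /
          ((Nat.factorial (n + k) : ℝ) * (Nat.factorial (n - k) : ℝ)) *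
        z ^ (2 * n - 2 * k)

/-- The polynomial `B_{0,2n}` (as a function of `z`). -/
noncomputable def B0 (n : ℕ) (z : ℝ) : ℝ :=
  ((-1 : ℝ) ^ n * (Nat.factorial n : ℝ) ^ 2 / (Nat.factorial (2 * n) : ℝ)) *
    ∑ k ∈ Finset.range (n + 1),
      (-1 : ℝ) ^ k * (Nat.factorial (2 * n + 2 * k) : ℝ) /
          ((Nat.factorial (2 * k) : ℝ) * (Nat.factorial (2 * n - 2 * k) : ℝ)) *
        (2 * z) ^ (2 * n - 2 * k)

/-- The polynomial `C_{0,2n}` (as a function of `z`). -/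
noncomputable def C0 (n : ℕ) (z : ℝ) : ℝ :=
  ((-1 : ℝ) ^ n * (Nat.factorial n : ℝ) ^ 2 / (Nat.factorial (2 * n) : ℝ)) *
    ∑ k ∈ Finset.range n,
      (-1 : ℝ) ^ (k + 1) * (Nat.factorial (2 * n + 2 * k + 1) : ℝ) /
          ((Nat.factorial (2 * k + 1) : ℝ) * (Nat.factorial (2 * n - 2 * k - 1) : ℝ)) *
        (2 * z) ^ (2 * n - 2 * k - 1)

/-!
A function `p + q cos + r sin` with polynomial `p, q, r` differentiates to one of the same
shape, and the same rule differentiates the formal power series `p + q · cos + r · sin`; so the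
`j`-th derivative of `g` at `0` is `j!` times the `j`-th coefficient of that series. `A` has only
even powers, and so has `B cos + C sin`, because `B` is even and `C` is odd. Its coefficient of
`z^(2m)`, `m ≤ n`, is a convolution which, up to a constant, equals
`∑ u, (-2)^u (2m choose u) (4n - u choose 2n) = [X^(2n)] (X + 1)^(4n - 2m) (X - 1)^(2m)`.
These central coefficients obey `c(N, m + 1) = c(N, m) - 4 c(N - 1, m)` since
`(X + 1)² = (X - 1)² + 4X`, which gives them in closed form, and the closed form is exactly the
coefficient of `z^(2m)` in `A`.
-/

namespace PowerSeries

variable {A : Type*} [CommRing A] [Algebra ℚ A]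

theorem coeff_cos_two_mul (s : ℕ) :
    coeff (2 * s) (cos A) = algebraMap ℚ A ((-1) ^ s / (2 * s).factorial) := by
  simp [cos]

theorem coeff_cos_two_mul_add_one (s : ℕ) : coeff (2 * s + 1) (cos A) = 0 := by
  simp [cos]

theorem coeff_sin_two_mul (s : ℕ) : coeff (2 * s) (sin A) = 0 := by
  simp [sin]

theorem coeff_sin_two_mul_add_one (s : ℕ) :
    coeff (2 * s + 1) (sin A) = algebraMap ℚ A ((-1) ^ s / (2 * s + 1).factorial) := by
  simp [sin, Nat.add_div_of_dvd_right]

private theorem natCast_succ_eq_algebraMap (k : ℕ) :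
    ((k : A) + 1) = algebraMap ℚ A ((k + 1 : ℕ) : ℚ) := by
  rw [map_natCast]; push_cast; rfl

theorem derivative_sin : d⁄dX A (sin A) = cos A := by
  ext k
  obtain ⟨s, rfl | rfl⟩ := Nat.even_or_odd' k
  · rw [coeff_derivative, coeff_sin_two_mul_add_one, coeff_cos_two_mul,
      natCast_succ_eq_algebraMap, ← map_mul, Nat.factorial_succ]
    congr 1
    push_cast
    field_simp
  · rw [coeff_derivative, show 2 * s + 1 + 1 = 2 * (s + 1) by ring, coeff_sin_two_mul,
      coeff_cos_two_mul_add_one, zero_mul]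

theorem derivative_cos : d⁄dX A (cos A) = -sin A := by
  ext k
  obtain ⟨s, rfl | rfl⟩ := Nat.even_or_odd' k
  · rw [coeff_derivative, coeff_cos_two_mul_add_one, map_neg, coeff_sin_two_mul, zero_mul,
      neg_zero]
  · rw [coeff_derivative, natCast_succ_eq_algebraMap, show 2 * s + 1 + 1 = 2 * (s + 1) by ring,
      coeff_cos_two_mul, map_neg, coeff_sin_two_mul_add_one, ← map_mul, ← map_neg,
      show 2 * (s + 1) = 2 * s + 1 + 1 by ring, Nat.factorial_succ]
    congr 1
    push_cast
    field_simp
    ring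

end PowerSeries

open Finset
namespace Polynomial

theorem coeff_sum_C_mul_X_pow_of_injOn {R ι : Type*} [Semiring R] {s : Finset ι} {e : ι → ℕ}
    (he : Set.InjOn e s) (f : ι → R) {i : ι} (hi : i ∈ s) {d : ℕ} (hd : e i = d) :
    (∑ k ∈ s, C (f k) * X ^ e k).coeff d = f i := by
  rw [finsetSum_coeff, Finset.sum_eq_single_of_mem i hi, coeff_C_mul_X_pow, if_pos hd.symm]
  intro k hk hki
  rw [coeff_C_mul_X_pow, if_neg fun h => hki (he hk hi (h ▸ hd).symm)]

theorem coeff_sum_C_mul_X_pow_of_forall_ne {R ι : Type*} [Semiring R] {s : Finset ι}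
    {e : ι → ℕ} (f : ι → R) {d : ℕ} (h : ∀ k ∈ s, e k ≠ d) :
    (∑ k ∈ s, C (f k) * X ^ e k).coeff d = 0 := by
  rw [finsetSum_coeff]
  exact Finset.sum_eq_zero fun k hk => by rw [coeff_C_mul_X_pow, if_neg (h k hk).symm]

theorem coeff_X_add_one_pow_mul_X_sub_one_pow {R : Type*} [CommRing R] (a M N : ℕ) :
    ((X + 1) ^ a * (X - 1) ^ M : R[X]).coeff N =
      ∑ p ∈ antidiagonal M, (-2) ^ p.1 * (M.choose p.1 : R) * ((a + p.2).choose N : R) := by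
  rw [show (X - 1 : R[X]) = C (-2) + (X + 1) by simp [C_neg, C_ofNat]; ring,
    (Commute.all (C (-2) : R[X]) (X + 1)).add_pow' M, Finset.mul_sum, finsetSum_coeff]
  refine Finset.sum_congr rfl fun p _ => ?_
  rw [show (X + 1) ^ a * (M.choose p.1 • (C (-2) ^ p.1 * (X + 1) ^ p.2)) =
      C ((-2) ^ p.1 * (M.choose p.1 : R)) * (X + 1) ^ (a + p.2) by
        simp only [nsmul_eq_mul, C_mul, C_pow, map_natCast, pow_add]; ring,
    coeff_C_mul, coeff_X_add_one_pow]

theorem coeff_succ_X_add_one_pow_mul_X_sub_one_pow_add_two {R : Type*} [CommRing R]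
    (a b K : ℕ) :
    ((X + 1) ^ a * (X - 1) ^ (b + 2) : R[X]).coeff (K + 1) =
      ((X + 1) ^ (a + 2) * (X - 1) ^ b : R[X]).coeff (K + 1) -
        4 * ((X + 1) ^ a * (X - 1) ^ b : R[X]).coeff K := by
  have h : ((X + 1) ^ (a + 2) * (X - 1) ^ b : R[X]) =
      (X + 1) ^ a * (X - 1) ^ (b + 2) + 4 * (X * ((X + 1) ^ a * (X - 1) ^ b)) := by ring
  rw [h, coeff_add, coeff_ofNat_mul, coeff_X_mul]
  ring

theorem coeff_X_add_one_pow_mul_X_sub_one_pow_central {K : Type*} [Field K] [CharZero K]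
    {m N : ℕ} (h : m ≤ N) :
    ((X + 1) ^ (2 * (N - m)) * (X - 1) ^ (2 * m) : K[X]).coeff N =
      (-1) ^ m * (2 * m).factorial * (2 * (N - m)).factorial /
        (m.factorial * (N - m).factorial * N.factorial) := by
  induction m generalizing N with
  | zero =>
    rw [Nat.sub_zero, mul_zero, pow_zero, mul_one, coeff_X_add_one_pow,
      Nat.cast_choose K (by omega : N ≤ 2 * N), show 2 * N - N = N by omega]
    simp
  | succ m ih =>
    obtain ⟨L, rfl⟩ : ∃ L, N = L + 1 := ⟨N - 1, by omega⟩
    rw [show 2 * (L + 1 - (m + 1)) = 2 * (L - m) by omega, mul_add, mul_one,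
      coeff_succ_X_add_one_pow_mul_X_sub_one_pow_add_two,
      show 2 * (L - m) + 2 = 2 * (L + 1 - m) by omega, ih (by omega), ih (by omega)]
    obtain ⟨d, rfl⟩ : ∃ d, L = m + d := ⟨L - m, by omega⟩
    rw [show m + d + 1 - m = d + 1 by omega, show m + d - m = d by omega,
      show m + d + 1 - (m + 1) = d by omega]
    simp only [show 2 * (d + 1) = 2 * d + 1 + 1 by ring, show 2 * m + 2 = 2 * m + 1 + 1 by ring,
      Nat.factorial_succ]
    have hmd : (m : K) + d + 1 ≠ 0 := by exact_mod_cast (m + d).succ_ne_zero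
    have hd : (d : K) + 1 ≠ 0 := by exact_mod_cast d.succ_ne_zero
    have hm : (m : K) + 1 ≠ 0 := by exact_mod_cast m.succ_ne_zero
    push_cast
    field_simp
    ring

end Polynomial

open Polynomial
open scoped PowerSeries

noncomputable def trigSeries (p q r : ℝ[X]) : ℝ⟦X⟧ :=
  p + q * PowerSeries.cos ℝ + r * PowerSeries.sin ℝ

noncomputable def trigFun (p q r : ℝ[X]) (z : ℝ) : ℝ :=
  p.eval z + q.eval z * Real.cos z + r.eval z * Real.sin z

theorem hasDerivAt_trigFun (p q r : ℝ[X]) (z : ℝ) :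
    HasDerivAt (trigFun p q r)
      (trigFun (derivative p) (derivative q + r) (derivative r - q) z) z := by
  have h : HasDerivAt (trigFun p q r) _ z :=
    ((p.hasDerivAt z).add ((q.hasDerivAt z).mul (Real.hasDerivAt_cos z))).add
      ((r.hasDerivAt z).mul (Real.hasDerivAt_sin z))
  convert h using 1
  simp only [trigFun, eval_add, eval_sub]
  ring

theorem deriv_trigFun (p q r : ℝ[X]) :
    deriv (trigFun p q r) = trigFun (derivative p) (derivative q + r) (derivative r - q) :=
  funext fun z => (hasDerivAt_trigFun p q r z).deriv

theorem derivative_trigSeries (p q r : ℝ[X]) :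
    d⁄dX ℝ (trigSeries p q r) =
      trigSeries (derivative p) (derivative q + r) (derivative r - q) := by
  simp only [trigSeries, map_add, Derivation.leibniz, PowerSeries.derivative_coe,
    PowerSeries.derivative_cos, PowerSeries.derivative_sin, Polynomial.coe_add,
    Polynomial.coe_sub, smul_eq_mul]
  ring

theorem iteratedDeriv_trigFun_zero (j : ℕ) (p q r : ℝ[X]) :
    iteratedDeriv j (trigFun p q r) 0 = j.factorial * PowerSeries.coeff j (trigSeries p q r) := by
  induction j generalizing p q r with
  | zero =>
    have hcos : PowerSeries.constantCoeff (PowerSeries.cos ℝ) = 1 := by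
      simpa using PowerSeries.coeff_cos_two_mul (A := ℝ) 0
    have hsin : PowerSeries.constantCoeff (PowerSeries.sin ℝ) = 0 := by
      simpa using PowerSeries.coeff_sin_two_mul (A := ℝ) 0
    simp [trigFun, trigSeries, PowerSeries.coeff_zero_eq_constantCoeff_apply, hcos, hsin,
      coeff_zero_eq_eval_zero]
  | succ j ih =>
    rw [iteratedDeriv_succ', deriv_trigFun, ih, ← derivative_trigSeries,
      PowerSeries.coeff_derivative, Nat.factorial_succ]
    push_cast
    ring

noncomputable def polyA (n : ℕ) : ℝ[X] :=
  C ((n.factorial : ℝ) ^ 2 / (2 * n).factorial) *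
    ∑ k ∈ range (n + 1),
      C (((2 * n + 2 * k).factorial : ℝ) / ((n + k).factorial * (n - k).factorial)) *
        X ^ (2 * n - 2 * k)

noncomputable def polyB (n : ℕ) : ℝ[X] :=
  C ((-1) ^ n * (n.factorial : ℝ) ^ 2 / (2 * n).factorial) *
    ∑ k ∈ range (n + 1),
      C ((-1) ^ k * ((2 * n + 2 * k).factorial : ℝ) /
          ((2 * k).factorial * (2 * n - 2 * k).factorial) * 2 ^ (2 * n - 2 * k)) *
        X ^ (2 * n - 2 * k)

noncomputable def polyC (n : ℕ) : ℝ[X] :=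
  C ((-1) ^ n * (n.factorial : ℝ) ^ 2 / (2 * n).factorial) *
    ∑ k ∈ range n,
      C ((-1) ^ (k + 1) * ((2 * n + 2 * k + 1).factorial : ℝ) /
          ((2 * k + 1).factorial * (2 * n - 2 * k - 1).factorial) * 2 ^ (2 * n - 2 * k - 1)) *
        X ^ (2 * n - 2 * k - 1)

theorem eval_polyA (n : ℕ) (z : ℝ) : (polyA n).eval z = A0 n z := by
  simp [polyA, A0, eval_finsetSum]

theorem eval_polyB (n : ℕ) (z : ℝ) : (polyB n).eval z = B0 n z := by
  simp [polyB, B0, eval_finsetSum, mul_pow, mul_assoc]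

theorem eval_polyC (n : ℕ) (z : ℝ) : (polyC n).eval z = C0 n z := by
  simp [polyC, C0, eval_finsetSum, mul_pow, mul_assoc]

theorem coeff_polyA_two_mul {m k n : ℕ} (h : m + k = n) :
    (polyA n).coeff (2 * m) = (n.factorial : ℝ) ^ 2 / (2 * n).factorial *
      ((2 * n + 2 * k).factorial / ((n + k).factorial * m.factorial)) := by
  rw [polyA, coeff_C_mul, coeff_sum_C_mul_X_pow_of_injOn (i := k)
    (fun a ha b hb hab => by simp only [coe_range, Set.mem_Iio] at ha hb; omega) _
    (mem_range.2 (by omega)) (by omega), show n - k = m by omega]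

theorem coeff_polyA_two_mul_add_one (n m : ℕ) : (polyA n).coeff (2 * m + 1) = 0 := by
  rw [polyA, coeff_C_mul, coeff_sum_C_mul_X_pow_of_forall_ne _ fun k _ => by omega, mul_zero]

theorem coeff_polyB_two_mul {s k n : ℕ} (h : s + k = n) :
    (polyB n).coeff (2 * s) = (n.factorial : ℝ) ^ 2 / (2 * n).factorial *
      ((-1) ^ s * 2 ^ (2 * s) * (2 * n + 2 * k).factorial /
        ((2 * k).factorial * (2 * s).factorial)) := by
  rw [polyB, coeff_C_mul, coeff_sum_C_mul_X_pow_of_injOn (i := k)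
    (fun a ha b hb hab => by simp only [coe_range, Set.mem_Iio] at ha hb; omega) _
    (mem_range.2 (by omega)) (by omega), show 2 * n - 2 * k = 2 * s by omega, ← h]
  have hsign : ((-1 : ℝ) ^ (s + k)) * (-1) ^ k = (-1) ^ s := by
    rw [pow_add, mul_assoc, ← pow_add, Even.neg_one_pow ⟨k, rfl⟩, mul_one]
  linear_combination ((s + k).factorial : ℝ) ^ 2 / (2 * (s + k)).factorial *
    ((2 * (s + k) + 2 * k).factorial / ((2 * k).factorial * (2 * s).factorial) * 2 ^ (2 * s)) *
      hsign

theorem coeff_polyB_two_mul_add_one (n s : ℕ) : (polyB n).coeff (2 * s + 1) = 0 := by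
  rw [polyB, coeff_C_mul, coeff_sum_C_mul_X_pow_of_forall_ne _ fun k _ => by omega, mul_zero]

theorem coeff_polyC_two_mul_add_one {s k n : ℕ} (h : s + k + 1 = n) :
    (polyC n).coeff (2 * s + 1) = (n.factorial : ℝ) ^ 2 / (2 * n).factorial *
      ((-1) ^ s * 2 ^ (2 * s + 1) * (2 * n + 2 * k + 1).factorial /
        ((2 * k + 1).factorial * (2 * s + 1).factorial)) := by
  rw [polyC, coeff_C_mul, coeff_sum_C_mul_X_pow_of_injOn (i := k)
    (fun a ha b hb hab => by simp only [coe_range, Set.mem_Iio] at ha hb; omega) _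
    (mem_range.2 (by omega)) (by omega), show 2 * n - 2 * k - 1 = 2 * s + 1 by omega, ← h]
  have hsign : ((-1 : ℝ) ^ (s + k + 1)) * (-1) ^ (k + 1) = (-1) ^ s := by
    rw [show s + k + 1 = s + (k + 1) by ring, pow_add, mul_assoc, ← pow_add,
      Even.neg_one_pow ⟨k + 1, rfl⟩, mul_one]
  linear_combination ((s + k + 1).factorial : ℝ) ^ 2 / (2 * (s + k + 1)).factorial *
    ((2 * (s + k + 1) + 2 * k + 1).factorial / ((2 * k + 1).factorial * (2 * s + 1).factorial) *
      2 ^ (2 * s + 1)) * hsign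

theorem coeff_polyC_two_mul (n s : ℕ) : (polyC n).coeff (2 * s) = 0 := by
  rw [polyC, coeff_C_mul,
    coeff_sum_C_mul_X_pow_of_forall_ne _ fun k hk => by rw [mem_range] at hk; omega, mul_zero]

-- The right side is the `(u, v)` term of `coeff_X_add_one_pow_mul_X_sub_one_pow` for
-- `a = 2 (2n - m)`, `M = 2m`, `N = 2n`, times a factor independent of `u`.
theorem coeff_polyB_mul_coeff_cos_add_coeff_polyC_mul_coeff_sin {n m u v : ℕ} (hm : m ≤ n)
    (huv : u + v = 2 * m) :
    PowerSeries.coeff u (polyB n : ℝ⟦X⟧) * PowerSeries.coeff v (PowerSeries.cos ℝ) +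
        PowerSeries.coeff u (polyC n : ℝ⟦X⟧) * PowerSeries.coeff v (PowerSeries.sin ℝ) =
      (n.factorial : ℝ) ^ 2 / (2 * n).factorial * (-1) ^ m * (2 * n).factorial / (2 * m).factorial *
        ((-2) ^ u * ((2 * m).choose u : ℝ) * ((2 * (2 * n - m) + v).choose (2 * n) : ℝ)) := by
  rw [coeff_coe, coeff_coe]
  obtain ⟨d, rfl⟩ : ∃ d, n = m + d := ⟨n - m, by omega⟩
  obtain ⟨s, rfl | rfl⟩ := Nat.even_or_odd' u
  · obtain ⟨t, rfl⟩ : ∃ t, v = 2 * t := ⟨m - s, by omega⟩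
    obtain rfl : m = s + t := by omega
    rw [coeff_polyB_two_mul (k := t + d) (by ring), coeff_polyC_two_mul,
      PowerSeries.coeff_cos_two_mul, PowerSeries.coeff_sin_two_mul,
      show 2 * (2 * (s + t + d) - (s + t)) + 2 * t = 2 * (s + t + d) + 2 * (t + d) by omega,
      show 2 * (s + t) = 2 * s + 2 * t by ring, Nat.cast_add_choose, Nat.cast_add_choose]
    simp only [map_div₀, map_pow, map_neg, map_one, map_natCast]
    rw [(even_two_mul s).neg_pow, pow_add]
    field_simp
    ring
  · obtain ⟨t, rfl⟩ : ∃ t, v = 2 * t + 1 := ⟨m - s - 1, by omega⟩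
    obtain rfl : m = s + t + 1 := by omega
    rw [coeff_polyB_two_mul_add_one, coeff_polyC_two_mul_add_one (k := t + d) (by ring),
      PowerSeries.coeff_cos_two_mul_add_one, PowerSeries.coeff_sin_two_mul_add_one,
      show 2 * (2 * (s + t + 1 + d) - (s + t + 1)) + (2 * t + 1) =
        2 * (s + t + 1 + d) + (2 * (t + d) + 1) by omega,
      show 2 * (s + t + 1) = (2 * s + 1) + (2 * t + 1) by ring, Nat.cast_add_choose,
      Nat.cast_add_choose, ← add_assoc (2 * (s + t + 1 + d))]
    simp only [map_div₀, map_pow, map_neg, map_one, map_natCast, zero_mul, zero_add]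
    rw [(odd_two_mul_add_one s).neg_pow, pow_add, pow_add]
    field_simp
    ring

theorem coeff_two_mul_polyB_mul_cos_add_polyC_mul_sin {n m : ℕ} (hm : m ≤ n) :
    PowerSeries.coeff (2 * m)
        ((polyB n : ℝ⟦X⟧) * PowerSeries.cos ℝ + (polyC n : ℝ⟦X⟧) * PowerSeries.sin ℝ) =
      (polyA n).coeff (2 * m) := by
  rw [map_add, PowerSeries.coeff_mul, PowerSeries.coeff_mul, ← sum_add_distrib,
    sum_congr rfl fun p hp => coeff_polyB_mul_coeff_cos_add_coeff_polyC_mul_coeff_sin hm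
      (HasAntidiagonal.mem_antidiagonal.1 hp),
    ← mul_sum, ← coeff_X_add_one_pow_mul_X_sub_one_pow,
    coeff_X_add_one_pow_mul_X_sub_one_pow_central (by omega),
    coeff_polyA_two_mul (k := n - m) (by omega)]
  obtain ⟨d, rfl⟩ : ∃ d, n = m + d := ⟨n - m, by omega⟩
  rw [show 2 * (2 * (m + d) - m) = 2 * (m + d) + 2 * d by omega,
    show 2 * (m + d) - m = m + d + d by omega, show m + d - m = d by omega]
  have hsign : ((-1 : ℝ) ^ m) * (-1) ^ m = 1 := by
    rw [← pow_add, Even.neg_one_pow ⟨m, rfl⟩]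
  field_simp
  linear_combination hsign

theorem coeff_two_mul_add_one_polyB_mul_cos_add_polyC_mul_sin (n m : ℕ) :
    PowerSeries.coeff (2 * m + 1)
        ((polyB n : ℝ⟦X⟧) * PowerSeries.cos ℝ + (polyC n : ℝ⟦X⟧) * PowerSeries.sin ℝ) = 0 := by
  rw [map_add, PowerSeries.coeff_mul, PowerSeries.coeff_mul, ← sum_add_distrib]
  refine sum_eq_zero fun p hp => ?_
  rw [HasAntidiagonal.mem_antidiagonal] at hp
  rw [coeff_coe, coeff_coe]
  obtain ⟨s, hs | hs⟩ := Nat.even_or_odd' p.1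
  · obtain ⟨t, ht⟩ : ∃ t, p.2 = 2 * t + 1 := ⟨m - s, by omega⟩
    rw [hs, ht, coeff_polyC_two_mul, PowerSeries.coeff_cos_two_mul_add_one, mul_zero, zero_mul,
      add_zero]
  · obtain ⟨t, ht⟩ : ∃ t, p.2 = 2 * t := ⟨m - s, by omega⟩
    rw [hs, ht, coeff_polyB_two_mul_add_one, PowerSeries.coeff_sin_two_mul, zero_mul, mul_zero,
      add_zero]

theorem coeff_trigSeries_polyA_neg_polyB_neg_polyC {n j : ℕ} (hj : j ≤ 2 * n + 1) :
    PowerSeries.coeff j (trigSeries (polyA n) (-polyB n) (-polyC n)) = 0 := by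
  have h : trigSeries (polyA n) (-polyB n) (-polyC n) = (polyA n : ℝ⟦X⟧) -
      ((polyB n : ℝ⟦X⟧) * PowerSeries.cos ℝ + (polyC n : ℝ⟦X⟧) * PowerSeries.sin ℝ) := by
    rw [trigSeries, Polynomial.coe_neg, Polynomial.coe_neg]
    ring
  rw [h, map_sub, coeff_coe, sub_eq_zero]
  obtain ⟨m, rfl | rfl⟩ := Nat.even_or_odd' j
  · exact (coeff_two_mul_polyB_mul_cos_add_polyC_mul_sin (by omega)).symm
  · rw [coeff_polyA_two_mul_add_one, coeff_two_mul_add_one_polyB_mul_cos_add_polyC_mul_sin]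

theorem stmt7_general (n : ℕ) :
    ∀ j : ℕ, j ≤ 2 * n + 1 →
      iteratedDeriv j (fun z : ℝ => A0 n z - B0 n z * Real.cos z - C0 n z * Real.sin z) 0 = 0 := by
  intro j hj
  have hg : (fun z : ℝ => A0 n z - B0 n z * Real.cos z - C0 n z * Real.sin z) =
      trigFun (polyA n) (-polyB n) (-polyC n) := by
    funext z
    rw [trigFun, eval_neg, eval_neg, eval_polyA, eval_polyB, eval_polyC]
    ring
  rw [hg, iteratedDeriv_trigFun_zero, coeff_trigSeries_polyA_neg_polyB_neg_polyC hj, mul_zero]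

theorem stmt7 (n : ℕ) (hn : 1 ≤ n) :
    ∀ j : ℕ, j ≤ 2 * n + 1 →
      iteratedDeriv j (fun z : ℝ => A0 n z - B0 n z * Real.cos z - C0 n z * Real.sin z) 0 = 0 :=
  stmt7_general n
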